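/- arXiv:0902.1364 — 4 statements merged into one kernel-verified Lean document; each statement's English description precedes it below -/
import Mathlib

section
/- Every k-connected chordal graph with at least k+2 vertices has at least 2k contractible edges. -/
/-!
Every edge at a simplicial vertex `v` is contractible: a walk avoiding a set `T` can be rerouted
around `v` through its clique neighbourhood, and a walk avoiding `v` survives the contraction, so
a separator of `G / uv` is (the image of) a separator of `G` of the same size.

By Dirac's lemma a chordal graph is complete or has two nonadjacent simplicial vertices. In the
second case both have degree at least `k`, and their incidence sets are disjoint. In the complete
case two vertices of degree `n - 1 ≥ k + 1` share one edge, which leaves `2n - 3 ≥ 2k` edges.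

Dirac's lemma goes by induction on the vertex set. For nonadjacent `a`, `b`, an inclusion-minimal
`a`–`b` separator `S` is a clique: for nonadjacent `x, y ∈ S`, shortest `x`–`y` paths through the
side of `a` and through the side of `b` are chordless and close up to a chordless cycle of length
at least `4`. Applying induction to one side together with `S`, some simplicial vertex lies
outside the clique `S`, and it is simplicial in the whole graph.
-/

open SimpleGraph

/-- `S` is a vertex separator of `G`: deleting `S` leaves a disconnected graph
(two vertices with no path between them). -/
def IsSeparator {V : Type*} (G : SimpleGraph V) (S : Set V) : Prop :=
  ¬ (G.induce (Sᶜ : Set V)).Preconnected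

/-- `S` is a minimal vertex separator of `G`. -/
def MinimalSeparator {V : Type*} (G : SimpleGraph V) (S : Set V) : Prop :=
  IsSeparator G S ∧ ∀ S' ⊂ S, ¬ IsSeparator G S'

/-- `G` is `k`-connected: more than `k` vertices and every separator has size at least `k`. -/
def KConnected {V : Type*} [Fintype V] (k : ℕ) (G : SimpleGraph V) : Prop :=
  k < Fintype.card V ∧ ∀ S : Set V, IsSeparator G S → k ≤ S.ncard

/-- Vertex connectivity: least size of a set whose removal disconnects the graph
or leaves at most one vertex. -/
noncomputable def vConn {V : Type*} [Fintype V] (G : SimpleGraph V) : ℕ :=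
  sInf {n | ∃ S : Set V, S.ncard = n ∧ (IsSeparator G S ∨ (Sᶜ : Set V).ncard ≤ 1)}

/-- Contraction of the edge `{u,v}`: the vertex `v` is deleted and `u` plays the
role of the merged vertex `z`, adjacent to all former neighbors of `u` or `v`. -/
def contract {V : Type*} (G : SimpleGraph V) (u v : V) :
    SimpleGraph {x : V // x ≠ v} where
  Adj a b := a ≠ b ∧ (G.Adj a b ∨ (a.1 = u ∧ G.Adj v b) ∨ (b.1 = u ∧ G.Adj v a))
  symm := by
    constructor
    rintro a b ⟨h1, h2 | ⟨h3, h4⟩ | ⟨h3, h4⟩⟩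
    · exact ⟨h1.symm, Or.inl h2.symm⟩
    · exact ⟨h1.symm, Or.inr (Or.inr ⟨h3, h4⟩)⟩
    · exact ⟨h1.symm, Or.inr (Or.inl ⟨h3, h4⟩)⟩
  loopless := by constructor; rintro a ⟨h, -⟩; exact h rfl

/-- A tree decomposition of `G` with tree `T` and bags `l`. -/
structure TreeDecomp {V ι : Type*} (G : SimpleGraph V) (T : SimpleGraph ι)
    (l : ι → Set V) : Prop where
  conn : T.Connected
  acyclic : T.IsAcyclic
  coversV : ∀ v : V, ∃ x : ι, v ∈ l x
  coversE : ∀ ⦃u v : V⦄, G.Adj u v → ∃ x : ι, u ∈ l x ∧ v ∈ l x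
  subtree : ∀ v : V, (T.induce {x : ι | v ∈ l x}).Connected

/-- A clique tree of `G`: a tree decomposition whose bags are exactly the
maximal cliques of `G`. -/
def IsCliqueTree {V ι : Type*} (G : SimpleGraph V) (T : SimpleGraph ι)
    (l : ι → Set V) : Prop :=
  TreeDecomp G T l ∧ (∀ x : ι, Maximal G.IsClique (l x)) ∧
    ∀ C : Set V, Maximal G.IsClique C → ∃ x : ι, l x = C

/-- `G` is chordal: every cycle of length at least 4 has a chord. -/
def IsChordal {V : Type*} (G : SimpleGraph V) : Prop :=
  ∀ (v : V) (w : G.Walk v v), w.IsCycle → 4 ≤ w.length →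
    ∃ a b : V, G.Adj a b ∧ a ∈ w.support ∧ b ∈ w.support ∧ s(a, b) ∉ w.edges

/-- A split partition of `G`: `I` is a stable set, `K` a clique, partitioning the vertices. -/
def IsSplitPartition {V : Type*} (G : SimpleGraph V) (I K : Set V) : Prop :=
  I ∪ K = Set.univ ∧ Disjoint I K ∧ (∀ a ∈ I, ∀ b ∈ I, ¬ G.Adj a b) ∧ G.IsClique K

namespace SimpleGraph

variable {V : Type*} {G : SimpleGraph V}

def ReachableIn (G : SimpleGraph V) (s : Set V) (u v : V) : Prop :=
  ∃ p : G.Walk u v, ∀ z ∈ p.support, z ∈ s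

namespace ReachableIn

variable {s t : Set V} {u v w : V}

theorem refl (hu : u ∈ s) : G.ReachableIn s u u :=
  ⟨.nil, by simpa using hu⟩

theorem of_adj (h : G.Adj u v) (hu : u ∈ s) (hv : v ∈ s) : G.ReachableIn s u v :=
  ⟨h.toWalk, by simp [hu, hv]⟩

theorem symm : G.ReachableIn s u v → G.ReachableIn s v u
  | ⟨p, hp⟩ => ⟨p.reverse, by simpa using hp⟩

theorem trans : G.ReachableIn s u v → G.ReachableIn s v w → G.ReachableIn s u w
  | ⟨p, hp⟩, ⟨q, hq⟩ => ⟨p.append q, by simp only [Walk.mem_support_append_iff]; grind⟩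

theorem mono (hst : s ⊆ t) : G.ReachableIn s u v → G.ReachableIn t u v
  | ⟨p, hp⟩ => ⟨p, fun z hz => hst (hp z hz)⟩

theorem mem_left : G.ReachableIn s u v → u ∈ s
  | ⟨p, hp⟩ => hp u p.start_mem_support

theorem mem_right : G.ReachableIn s u v → v ∈ s
  | ⟨p, hp⟩ => hp v p.end_mem_support

theorem within_reachableSet : G.ReachableIn s u v → G.ReachableIn {z | G.ReachableIn s u z} u v
  | ⟨p, hp⟩ => by
    classical
    exact ⟨p, fun z hz =>
      ⟨p.takeUntil z hz, fun y hy => hp y (p.support_takeUntil_subset_support hz hy)⟩⟩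

end ReachableIn

theorem reachable_induce_iff {s : Set V} {u v : s} :
    (G.induce s).Reachable u v ↔ G.ReachableIn s u v := by
  constructor
  · rintro ⟨p⟩
    refine ⟨p.map (Embedding.induce s).toHom, fun z hz => ?_⟩
    change z ∈ (p.map (Embedding.induce s).toHom).support at hz
    obtain ⟨y, -, rfl⟩ := List.mem_map.mp (by rwa [Walk.support_map] at hz)
    exact y.2
  · rintro ⟨p, hp⟩
    exact ⟨p.induce s hp⟩

namespace Walk

theorem two_le_length_of_not_adj {u v : V} (p : G.Walk u v) (huv : u ≠ v) (h : ¬ G.Adj u v) :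
    2 ≤ p.length := by
  by_contra hp
  interval_cases hlen : p.length
  · exact huv (eq_of_length_eq_zero hlen)
  · exact h (adj_of_length_eq_one hlen)

theorem IsPath.start_notMem_support_tail {u v : V} {p : G.Walk u v} (hp : p.IsPath) :
    u ∉ p.support.tail := by
  have := hp.support_nodup
  rw [← p.cons_tail_support, List.nodup_cons] at this
  exact this.1

theorem IsChordless.append {x y z : V} {p : G.Walk x y} {q : G.Walk y z} (hp : p.IsChordless)
    (hq : q.IsChordless) (hpq : ∀ u ∈ p.support, ∀ v ∈ q.support, u ∉ q.support →
      v ∉ p.support → ¬ G.Adj u v) : (p.append q).IsChordless := by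
  rw [isChordless_iff_forall_mem_edges]
  intro c d hc hd hcd
  rw [mem_support_append_iff] at hc hd
  rw [edges_append, List.mem_append]
  by_cases hcp : c ∈ p.support <;> by_cases hdp : d ∈ p.support
  · exact Or.inl (hp.mem_edges hcp hdp hcd)
  · have hdq := hd.resolve_left hdp
    by_cases hcq : c ∈ q.support
    · exact Or.inr (hq.mem_edges hcq hdq hcd)
    · exact absurd hcd (hpq c hcp d hdq hcq hdp)
  · have hcq := hc.resolve_left hcp
    by_cases hdq : d ∈ q.support
    · exact Or.inr (hq.mem_edges hcq hdq hcd)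
    · exact absurd hcd.symm (hpq d hdp c hcq hdq hcp)
  · exact Or.inr (hq.mem_edges (hc.resolve_left hcp) (hd.resolve_left hdp) hcd)

variable [DecidableEq V] {x y c d : V}

theorem exists_shorter_of_chord_start (p : G.Walk x y) (hd : d ∈ p.support) (hxd : G.Adj x d)
    (he : s(x, d) ∉ p.edges) :
    ∃ q : G.Walk x y, q.length < p.length ∧ ∀ z ∈ q.support, z ∈ p.support := by
  cases p with
  | nil => exact absurd (by simpa using hd) hxd.ne'
  | @cons _ m _ h p =>
    have hd' : d ∈ p.support := by
      simpa [hxd.ne'] using hd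
    have hmd : m ≠ d := by
      rintro rfl
      simp at he
    refine ⟨cons hxd (p.dropUntil d hd'), ?_, ?_⟩
    · have hsplit := congrArg length (p.take_spec hd')
      have hpos : (p.takeUntil d hd').length ≠ 0 := fun h0 => hmd (eq_of_length_eq_zero h0)
      rw [length_append] at hsplit
      simp only [length_cons]
      omega
    · intro z hz
      simp only [support_cons, List.mem_cons] at hz ⊢
      exact hz.imp_right fun h => p.support_dropUntil_subset_support hd' h

theorem exists_shorter_of_chord (hcd : G.Adj c d) :
    ∀ {x : V} (p : G.Walk x y), c ∈ p.support → d ∈ p.support → s(c, d) ∉ p.edges →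
      ∃ q : G.Walk x y, q.length < p.length ∧ ∀ z ∈ q.support, z ∈ p.support
  | _, nil, hc, hd, _ => by simp_all
  | x, cons h p, hc, hd, he => by
    by_cases hxc : x = c
    · subst hxc
      exact exists_shorter_of_chord_start _ hd hcd he
    by_cases hxd : x = d
    · subst hxd
      exact exists_shorter_of_chord_start _ hc hcd.symm (by rwa [Sym2.eq_swap])
    obtain ⟨q, hlt, hsub⟩ := exists_shorter_of_chord hcd p
      (by simpa [Ne.symm hxc] using hc) (by simpa [Ne.symm hxd] using hd)
      (fun h' => he (by simp_all))
    refine ⟨cons h q, by simpa using hlt, ?_⟩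
    intro z hz
    simp only [support_cons, List.mem_cons] at hz ⊢
    exact hz.imp_right (hsub z)

end Walk

theorem ReachableIn.exists_isPath_isChordless {s : Set V} {u v : V} (h : G.ReachableIn s u v) :
    ∃ p : G.Walk u v, p.IsPath ∧ p.IsChordless ∧ ∀ z ∈ p.support, z ∈ s := by
  classical
  have hex : ∃ n, ∃ p : G.Walk u v, p.length = n ∧ ∀ z ∈ p.support, z ∈ s :=
    let ⟨p, hp⟩ := h; ⟨_, p, rfl, hp⟩
  obtain ⟨p, hlen, hp⟩ := Nat.find_spec hex
  have hmin : ∀ q : G.Walk u v, (∀ z ∈ q.support, z ∈ s) → p.bypass.length ≤ q.length :=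
    fun q hq => p.length_bypass_le_length.trans (hlen ▸ Nat.find_min' hex ⟨q, rfl, hq⟩)
  refine ⟨p.bypass, p.bypass_isPath, ?_, fun z hz => hp z (p.support_bypass_subset_support hz)⟩
  rw [Walk.isChordless_iff_forall_mem_edges]
  intro c d hc hd hcd
  by_contra he
  obtain ⟨q, hlt, hsub⟩ := p.bypass.exists_shorter_of_chord hcd hc hd he
  have := hmin q fun z hz => hp z (p.support_bypass_subset_support (hsub z hz))
  omega

theorem ReachableIn.insert_insert_of_adj {t : Set V} {a x y x' y' : V}
    (hx' : G.ReachableIn t a x') (hy' : G.ReachableIn t a y') (hxx' : G.Adj x x')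
    (hyy' : G.Adj y y') : G.ReachableIn (insert x (insert y {z | G.ReachableIn t a z})) x y := by
  have hsub : {z | G.ReachableIn t a z} ⊆ insert x (insert y {z | G.ReachableIn t a z}) :=
    (Set.subset_insert _ _).trans (Set.subset_insert _ _)
  have h : G.ReachableIn {z | G.ReachableIn t a z} x' y' :=
    hx'.within_reachableSet.symm.trans hy'.within_reachableSet
  exact (ReachableIn.of_adj hxx' (by simp) (hsub h.mem_left)).trans
    ((h.mono hsub).trans (.of_adj hyy'.symm (hsub h.mem_right) (by simp)))

section

variable {s S : Set V} {a b : V}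

def Separates (G : SimpleGraph V) (s S : Set V) (a b : V) : Prop :=
  a ∉ S ∧ b ∉ S ∧ ¬ G.ReachableIn (s \ S) a b

theorem separates_comm : G.Separates s S a b ↔ G.Separates s S b a :=
  ⟨fun ⟨ha, hb, h⟩ => ⟨hb, ha, fun h' => h h'.symm⟩,
    fun ⟨hb, ha, h⟩ => ⟨ha, hb, fun h' => h h'.symm⟩⟩

theorem separates_sdiff_pair (hab : a ≠ b) (hn : ¬ G.Adj a b) :
    G.Separates s (s \ {a, b}) a b := by
  refine ⟨fun h => h.2 (by simp), fun h => h.2 (by simp), ?_⟩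
  rintro ⟨p, hp⟩
  obtain ⟨d, hd, hfst, hsnd⟩ := p.exists_boundary_dart {a} rfl hab.symm
  have hsnd' : d.snd = b := by
    have := hp _ (p.dart_snd_mem_support_of_mem_darts hd)
    simp_all
  rw [Set.mem_singleton_iff] at hfst
  exact hn (hfst ▸ hsnd' ▸ d.adj)

namespace Separates

variable {z z' : V}

theorem not_adj (hS : G.Separates s S a b) (hz : G.ReachableIn (s \ S) a z)
    (hz' : G.ReachableIn (s \ S) b z') : ¬ G.Adj z z' :=
  fun h => hS.2.2 (hz.trans ((ReachableIn.of_adj h hz.mem_right hz'.mem_right).trans hz'.symm))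

theorem ne (hS : G.Separates s S a b) (hz : G.ReachableIn (s \ S) a z)
    (hz' : G.ReachableIn (s \ S) b z') : z ≠ z' := by
  rintro rfl
  exact hS.2.2 (hz.trans hz'.symm)

theorem exists_adj_of_minimal (hS : Minimal (G.Separates s · a b) S) {x : V} (hx : x ∈ S) :
    ∃ y, G.ReachableIn (s \ S) a y ∧ G.Adj x y := by
  have hsub : S \ {x} < S := Set.sdiff_singleton_ssubset.mpr hx
  obtain ⟨p, hp⟩ : G.ReachableIn (s \ (S \ {x})) a b := by
    by_contra h
    exact hS.not_prop_of_lt hsub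
      ⟨fun h' => hS.prop.1 h'.1, fun h' => hS.prop.2.1 h'.1, h⟩
  have ha : a ∈ s \ S := ⟨(hp a p.start_mem_support).1, hS.prop.1⟩
  obtain ⟨d, hd, hfst, hsnd⟩ :=
    p.exists_boundary_dart {z | G.ReachableIn (s \ S) a z} (.refl ha) hS.prop.2.2
  have hdp := hp _ (p.dart_snd_mem_support_of_mem_darts hd)
  have hdS : d.snd ∈ S := by
    by_contra h
    exact hsnd (ReachableIn.trans hfst (.of_adj d.adj hfst.mem_right ⟨hdp.1, h⟩))
  have hdx : d.snd = x := by
    by_contra h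
    exact hdp.2 ⟨hdS, h⟩
  exact ⟨d.fst, hfst, hdx ▸ d.adj.symm⟩

end Separates

end

def IsSimplicialIn (G : SimpleGraph V) (s : Set V) (v : V) : Prop :=
  v ∈ s ∧ G.IsClique (G.neighborSet v ∩ s)

theorem exists_isSimplicialIn_sdiff {t S : Set V}
    (h : G.IsClique t ∨ ∃ u v, u ≠ v ∧ ¬ G.Adj u v ∧ G.IsSimplicialIn t u ∧ G.IsSimplicialIn t v)
    (hS : G.IsClique S) {a : V} (ha : a ∈ t \ S) : ∃ z ∈ t \ S, G.IsSimplicialIn t z := by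
  obtain ht | ⟨u, v, huv, hn, hu, hv⟩ := h
  · exact ⟨a, ha, ha.1, IsClique.subset Set.inter_subset_right ht⟩
  by_cases huS : u ∈ S
  · by_cases hvS : v ∈ S
    · exact absurd (hS huS hvS huv) hn
    · exact ⟨v, ⟨hv.1, hvS⟩, hv⟩
  · exact ⟨u, ⟨hu.1, huS⟩, hu⟩

theorem IsSimplicialIn.of_reachableSet_union {s S : Set V} {a z : V}
    (h : G.IsSimplicialIn ({w | G.ReachableIn (s \ S) a w} ∪ S) z)
    (hz : G.ReachableIn (s \ S) a z) : G.IsSimplicialIn s z := by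
  refine ⟨hz.mem_right.1, h.2.subset ?_⟩
  rintro w ⟨hzw, hw⟩
  refine ⟨hzw, ?_⟩
  by_cases hwS : w ∈ S
  · exact Or.inr hwS
  · exact Or.inl (hz.trans (.of_adj hzw hz.mem_right ⟨hw, hwS⟩))

theorem ReachableIn.sdiff_singleton {s : Set V} {v a b : V} (hv : G.IsClique (G.neighborSet v))
    (h : G.ReachableIn s a b) (ha : a ≠ v) (hb : b ≠ v) : G.ReachableIn (s \ {v}) a b := by
  obtain ⟨p, hp⟩ := h
  -- The start `a'` may lag one step behind the walk, so that a visit to `v` can be skipped.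
  suffices key : ∀ {c b} (p : G.Walk c b), (∀ z ∈ p.support, z ∈ s) → b ≠ v →
      ∀ a' ∈ s \ {v}, (a' = c ∨ G.Adj a' c) → G.ReachableIn (s \ {v}) a' b from
    key p hp hb a ⟨hp a p.start_mem_support, ha⟩ (Or.inl rfl)
  intro c b p
  induction p with
  | nil =>
    rintro hp hb a' ha' (rfl | h)
    · exact .refl ha'
    · exact .of_adj h ha' ⟨hp _ (by simp), hb⟩
  | @cons c d _ hcd p ih =>
    intro hp hb a' ha' hac
    have hp' : ∀ z ∈ p.support, z ∈ s := fun z hz => hp z (by simp [hz])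
    by_cases hc : c = v
    · subst hc
      have ha'c : G.Adj a' c := hac.resolve_left ha'.2
      refine ih hp' hb a' ha' ?_
      by_cases ha'd : a' = d
      · exact Or.inl ha'd
      · exact Or.inr (hv ha'c.symm hcd ha'd)
    · have hcb := ih hp' hb c ⟨hp c (by simp), hc⟩ (Or.inr hcd)
      rcases hac with rfl | hac
      · exact hcb
      · exact (ReachableIn.of_adj hac ha' ⟨hp c (by simp), hc⟩).trans hcb

theorem ReachableIn.to_contract {s : Set V} {u v a b : V} (hvs : v ∉ s) (h : G.ReachableIn s a b)
    (ha : a ≠ v) (hb : b ≠ v) :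
    (contract G u v).ReachableIn {x | x.1 ∈ s} ⟨a, ha⟩ ⟨b, hb⟩ := by
  obtain ⟨p, hp⟩ := h
  induction p with
  | nil => exact .refl (hp _ (by simp))
  | @cons a c _ hac p ih =>
    have hc : c ∈ s := hp c (by simp)
    have hadj : (contract G u v).Adj ⟨a, ha⟩ ⟨c, ne_of_mem_of_not_mem hc hvs⟩ :=
      ⟨fun h => hac.ne (congrArg Subtype.val h), Or.inl hac⟩
    exact (ReachableIn.of_adj hadj (hp a (by simp)) hc).trans
      (ih _ hb fun z hz => hp z (by simp [hz]))

theorem ncard_incidenceSet (G : SimpleGraph V) (v : V) :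
    (G.incidenceSet v).ncard = (G.neighborSet v).ncard := by
  classical exact Nat.card_congr (G.incidenceSetEquivNeighborSet v)

theorem IsClique.ncard_neighborSet_of_univ [Fintype V] (hG : G.IsClique Set.univ) (v : V) :
    (G.neighborSet v).ncard = Fintype.card V - 1 := by
  have : G.neighborSet v = {v}ᶜ := by
    ext x
    simp only [mem_neighborSet, Set.mem_compl_iff, Set.mem_singleton_iff]
    exact ⟨fun h => h.ne', fun h => hG (Set.mem_univ _) (Set.mem_univ _) (Ne.symm h)⟩
  rw [this, Set.ncard_compl, Set.ncard_singleton, Nat.card_eq_fintype_card]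

end SimpleGraph

section

variable {V : Type*} {G : SimpleGraph V}

theorem isSeparator_iff {S : Set V} :
    IsSeparator G S ↔ ∃ u ∉ S, ∃ v ∉ S, ¬ G.ReachableIn Sᶜ u v := by
  simp only [IsSeparator, Preconnected, Subtype.forall, reachable_induce_iff]
  push Not
  rfl

theorem IsChordal.adj_of_isChordless (hG : IsChordal G) {A B : Set V} (hAB : Disjoint A B)
    (hnadj : ∀ a ∈ A, ∀ b ∈ B, ¬ G.Adj a b) {x y : V} (hxy : x ≠ y) {p : G.Walk x y}
    {q : G.Walk y x} (hp : p.IsPath) (hq : q.IsPath) (hpc : p.IsChordless) (hqc : q.IsChordless)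
    (hpA : ∀ z ∈ p.support, z ∈ insert x (insert y A))
    (hqB : ∀ z ∈ q.support, z ∈ insert x (insert y B)) : G.Adj x y := by
  by_contra hn
  have hp2 := p.two_le_length_of_not_adj hxy hn
  have hq2 := q.two_le_length_of_not_adj hxy.symm (fun h => hn h.symm)
  have hpq : ∀ z ∈ p.support, z ∈ q.support → z = x ∨ z = y := by
    intro z hzp hzq
    obtain h | h | hzA := hpA z hzp
    · exact Or.inl h
    · exact Or.inr h
    obtain h | h | hzB := hqB z hzq
    · exact Or.inl h
    · exact Or.inr h
    exact absurd hzB (hAB.notMem_of_mem_left hzA)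
  have hcyc : (p.append q).IsCycle := by
    refine hp.isCycle_append hq (fun z hzp hzq => ?_) (by omega)
    obtain rfl | rfl := hpq z (List.mem_of_mem_tail hzp) (List.mem_of_mem_tail hzq)
    · exact hp.start_notMem_support_tail hzp
    · exact hq.start_notMem_support_tail hzq
  have hchordless : (p.append q).IsChordless := by
    refine hpc.append hqc fun u hup v hvq huq hvp => ?_
    obtain rfl | rfl | huA := hpA u hup
    · exact absurd q.end_mem_support huq
    · exact absurd q.start_mem_support huq
    obtain rfl | rfl | hvB := hqB v hvq
    · exact absurd p.start_mem_support hvp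
    · exact absurd p.end_mem_support hvp
    exact hnadj u huA v hvB
  obtain ⟨c, d, hcd, hc, hd, he⟩ := hG x _ hcyc (by rw [Walk.length_append]; omega)
  exact he (hchordless.mem_edges hc hd hcd)

theorem IsChordal.isClique_of_minimal_separates (hG : IsChordal G) {s S : Set V} {a b : V}
    (hS : Minimal (G.Separates s · a b) S) : G.IsClique S := by
  intro x hx y hy hxy
  have hS' : Minimal (G.Separates s · b a) S := by simpa only [separates_comm] using hS
  obtain ⟨xa, hxa, hxxa⟩ := Separates.exists_adj_of_minimal hS hx
  obtain ⟨ya, hya, hyya⟩ := Separates.exists_adj_of_minimal hS hy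
  obtain ⟨xb, hxb, hxxb⟩ := Separates.exists_adj_of_minimal hS' hx
  obtain ⟨yb, hyb, hyyb⟩ := Separates.exists_adj_of_minimal hS' hy
  obtain ⟨p, hp, hpc, hpA⟩ :=
    (ReachableIn.insert_insert_of_adj hxa hya hxxa hyya).exists_isPath_isChordless
  obtain ⟨q, hq, hqc, hqB⟩ :=
    (ReachableIn.insert_insert_of_adj hxb hyb hxxb hyyb).symm.exists_isPath_isChordless
  refine hG.adj_of_isChordless ?_ (fun z hz z' hz' => hS.prop.not_adj hz hz') hxy hp hq hpc hqc
    hpA hqB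
  exact Set.disjoint_left.mpr fun z hzA hzB => hS.prop.ne hzA hzB rfl

theorem IsChordal.isClique_or_exists_isSimplicialIn [Finite V] (hG : IsChordal G) (s : Set V) :
    G.IsClique s ∨ ∃ u v, u ≠ v ∧ ¬ G.Adj u v ∧ G.IsSimplicialIn s u ∧ G.IsSimplicialIn s v := by
  induction s using WellFoundedLT.induction with
  | ind s ih =>
  by_cases hs : G.IsClique s
  · exact Or.inl hs
  obtain ⟨a, ha, b, hb, hab, hn⟩ : ∃ a ∈ s, ∃ b ∈ s, a ≠ b ∧ ¬ G.Adj a b := by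
    simpa [IsClique, Set.Pairwise] using hs
  obtain ⟨S, hSs, hS⟩ := exists_minimal_le_of_wellFoundedLT (G.Separates s · a b) _
    (separates_sdiff_pair hab hn)
  have hSc := hG.isClique_of_minimal_separates hS
  have side : ∀ {a b}, G.Separates s S a b → a ∈ s → b ∈ s →
      ∃ z, G.ReachableIn (s \ S) a z ∧ G.IsSimplicialIn s z := by
    intro a b hsep ha hb
    have hlt : {w | G.ReachableIn (s \ S) a w} ∪ S ⊂ s := by
      refine Set.ssubset_iff_exists.mpr ⟨Set.union_subset (fun w hw => hw.mem_right.1)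
        (hSs.trans Set.sdiff_subset), b, hb, ?_⟩
      rintro (h | h)
      · exact hsep.2.2 h
      · exact hsep.2.1 h
    obtain ⟨z, ⟨hzC | hzS, hzS'⟩, hz⟩ :=
      exists_isSimplicialIn_sdiff (ih _ hlt) hSc ⟨Or.inl (.refl ⟨ha, hsep.1⟩), hsep.1⟩
    · exact ⟨z, hzC, hz.of_reachableSet_union hzC⟩
    · exact absurd hzS hzS'
  obtain ⟨u, hu, hu'⟩ := side hS.prop ha hb
  obtain ⟨v, hv, hv'⟩ := side (separates_comm.mp hS.prop) hb ha
  exact Or.inr ⟨u, v, hS.prop.ne hu hv, hS.prop.not_adj hu hv, hu', hv'⟩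

theorem KConnected.le_ncard_neighborSet [Fintype V] {k : ℕ} (hconn : KConnected k G) {v w : V}
    (hvw : v ≠ w) (hn : ¬ G.Adj v w) : k ≤ (G.neighborSet v).ncard := by
  refine hconn.2 _ (isSeparator_iff.mpr ⟨v, by simp, w, hn, ?_⟩)
  rintro ⟨p, hp⟩
  cases p with
  | nil => exact hvw rfl
  | @cons _ c _ hvc p => exact hp c (by simp) hvc

variable [Fintype V] [DecidableEq V] {k : ℕ}

theorem KConnected.contract_of_isClique {u v : V} (hconn : KConnected k G)
    (hcard : k + 2 ≤ Fintype.card V) (hv : G.IsClique (G.neighborSet v)) :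
    KConnected k (contract G u v) := by
  refine ⟨by rw [Fintype.card_subtype_compl, Fintype.card_subtype_eq]; omega, fun S hS => ?_⟩
  obtain ⟨α, hα, β, hβ, hαβ⟩ := isSeparator_iff.mp hS
  have hT : IsSeparator G (Subtype.val '' S) := by
    refine isSeparator_iff.mpr ⟨α, by rwa [Subtype.val_injective.mem_set_image], β,
      by rwa [Subtype.val_injective.mem_set_image], fun h => hαβ ?_⟩
    refine ((h.sdiff_singleton hv α.2 β.2).to_contract (u := u) (by simp) α.2 β.2).mono ?_
    rintro x ⟨hx, -⟩ hxS
    exact hx ⟨x, hxS, rfl⟩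
  calc k ≤ (Subtype.val '' S).ncard := hconn.2 _ hT
    _ = S.ncard := Set.ncard_image_of_injective _ Subtype.val_injective

def contractibleEdges (G : SimpleGraph V) (k : ℕ) : Set (Sym2 V) :=
  {e | e ∈ G.edgeSet ∧ ∃ u v : V, e = s(u, v) ∧ KConnected k (contract G u v)}

theorem KConnected.incidenceSet_subset_contractibleEdges (hconn : KConnected k G)
    (hcard : k + 2 ≤ Fintype.card V) {v : V} (hv : G.IsClique (G.neighborSet v)) :
    G.incidenceSet v ⊆ contractibleEdges G k := by
  rintro e ⟨he, hve⟩
  obtain ⟨w, rfl⟩ := Sym2.mem_iff_exists.mp hve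
  exact ⟨he, w, v, Sym2.eq_swap, hconn.contract_of_isClique hcard hv⟩

end

/-- A `k`-connected chordal graph with at least `k+2` vertices has
at least `2k` contractible edges. -/
theorem stmt_9 {V : Type*} [Fintype V] [DecidableEq V] (G : SimpleGraph V) (k : ℕ)
    (hcard : k + 2 ≤ Fintype.card V) (hconn : KConnected k G) (hch : IsChordal G) :
    2 * k ≤ {e : Sym2 V | e ∈ G.edgeSet ∧
        ∃ u v : V, e = s(u, v) ∧ KConnected k (contract G u v)}.ncard := by
  change 2 * k ≤ (contractibleEdges G k).ncard
  suffices h : ∃ v w, G.IsClique (G.neighborSet v) ∧ G.IsClique (G.neighborSet w) ∧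
      2 * k ≤ (G.incidenceSet v ∪ G.incidenceSet w).ncard by
    obtain ⟨v, w, hv, hw, hk⟩ := h
    exact hk.trans (Set.ncard_le_ncard (Set.union_subset
      (hconn.incidenceSet_subset_contractibleEdges hcard hv)
      (hconn.incidenceSet_subset_contractibleEdges hcard hw)))
  obtain hcl | ⟨v, w, hvw, hn, hv, hw⟩ := hch.isClique_or_exists_isSimplicialIn Set.univ
  · obtain ⟨v, w, hvw⟩ := Fintype.exists_pair_of_one_lt_card (by omega : 1 < Fintype.card V)
    refine ⟨v, w, hcl.subset (Set.subset_univ _), hcl.subset (Set.subset_univ _), ?_⟩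
    have h := Set.ncard_union_add_ncard_inter (G.incidenceSet v) (G.incidenceSet w)
    rw [G.incidenceSet_inter_incidenceSet_of_adj (hcl (Set.mem_univ v) (Set.mem_univ w) hvw),
      Set.ncard_singleton, ncard_incidenceSet, ncard_incidenceSet,
      hcl.ncard_neighborSet_of_univ, hcl.ncard_neighborSet_of_univ] at h
    omega
  · refine ⟨v, w, by simpa using hv.2, by simpa using hw.2, ?_⟩
    rw [Set.ncard_union_eq (Set.disjoint_iff_inter_eq_empty.mpr
      (G.incidenceSet_inter_incidenceSet_of_not_adj hn hvw)), ncard_incidenceSet,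
      ncard_incidenceSet]
    have := hconn.le_ncard_neighborSet hvw hn
    have := hconn.le_ncard_neighborSet hvw.symm (fun h => hn h.symm)
    omega
end

section
/- If an edge e of a k-connected graph G with at least k+2 vertices lies in a unique maximal clique of G, and G is chordal, then e is contractible. -/
open SimpleGraph

/-!
Let `S` be a separator of `G / uv` with fewer than `k` vertices. If `S` misses the merged vertex,
it separates `G` as well; otherwise `S ∪ {v}` separates `G` and has at most `k` vertices, so it is
a minimal separator of `G` containing `u` and `v`. For an edge `uv` inside a minimal separator `S`
of a chordal graph, every component of `G - S` contains a common neighbour of `u` and `v`: both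
have neighbours there by minimality, and a shortest `u`–`v` path through the component closes with
`uv` to a cycle whose only possible chord is `uv`, so it is a triangle. Common neighbours in two
different components are non-adjacent, so `uv` lies in two maximal cliques.
-/

namespace SimpleGraph

variable {V W : Type*} {G : SimpleGraph V}

theorem Reachable.lift {G' : SimpleGraph W} (f : V → W)
    (hf : ∀ ⦃a b⦄, G.Adj a b → G'.Reachable (f a) (f b)) {a b : V} (h : G.Reachable a b) :
    G'.Reachable (f a) (f b) := by
  rw [reachable_iff_reflTransGen] at h ⊢
  exact Relation.ReflTransGen.lift' f
    (fun _ _ hxy => (reachable_iff_reflTransGen _ _).1 (hf hxy)) _ _ h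

theorem Walk.isChordless_of_length_eq_dist {u v : V} (p : G.Walk u v)
    (hp : p.length = G.dist u v) : p.IsChordless := by
  classical
  have hidx : ∀ c (hc : c ∈ p.support), (p.takeUntil c hc).length = G.dist u c := fun c hc =>
    length_eq_dist_of_subwalk hp (isSubwalk_of_append_left (p.take_spec hc).symm)
  rw [isChordless_iff_forall_mem_edges]
  intro c d hc hd hcd
  have hc' := p.getVert_length_takeUntil hc
  have hd' := p.getVert_length_takeUntil hd
  have hcl := p.length_takeUntil_le_length hc
  have hdl := p.length_takeUntil_le_length hd
  rw [hidx] at hc' hd' hcl hdl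
  have hne : G.dist u c ≠ G.dist u d := fun h => hcd.ne (hc'.symm.trans (h ▸ hd'))
  rw [mk_mem_edges_iff_exists]
  rcases hcd.diff_dist_adj (u := u) with h | h | h
  · exact absurd h.symm hne
  · exact ⟨G.dist u c, by omega, by rw [hc', ← h, hd']⟩
  · refine ⟨G.dist u d, by omega, ?_⟩
    rw [show G.dist u d + 1 = G.dist u c by omega, hc', hd', Sym2.eq_swap]

theorem IsChordal.length_le_three {v : V} (hG : IsChordal G) {c : G.Walk v v} (hc : c.IsCycle)
    (hcl : c.IsChordless) : c.length ≤ 3 := by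
  by_contra! h
  obtain ⟨a, b, hab, ha, hb, hnot⟩ := hG v c hc h
  exact hnot (hcl.mem_edges ha hb hab)

/-- The edges of `G` inside `C ∪ {u, v}` with an endpoint in `C`. For `u, v ∉ C` its `u`–`v`
paths are the `u`–`v` paths of `G`, other than the edge `uv`, with all inner vertices in `C`. -/
def throughGraph (G : SimpleGraph V) (C : Set V) (u v : V) : SimpleGraph V where
  Adj a b := G.Adj a b ∧ (a ∈ C ∨ b ∈ C) ∧ (a ∈ C ∨ a = u ∨ a = v) ∧ (b ∈ C ∨ b = u ∨ b = v)
  symm := ⟨fun _ _ ⟨h, h₁, h₂, h₃⟩ => ⟨h.symm, h₁.symm, h₃, h₂⟩⟩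
  loopless := ⟨fun _ h => h.1.ne rfl⟩

theorem IsChordal.exists_adj_adj_of_preconnected (hG : IsChordal G) {C : Set V}
    (hC : (G.induce C).Preconnected) {u v x y : V} (huv : G.Adj u v) (hu : u ∉ C) (hv : v ∉ C)
    (hx : x ∈ C) (hy : y ∈ C) (hux : G.Adj u x) (hvy : G.Adj v y) :
    ∃ z ∈ C, G.Adj u z ∧ G.Adj v z := by
  set G' := G.throughGraph C u v
  have hle : G' ≤ G := fun _ _ h => h.1
  have hnadj : ¬ G'.Adj u v := fun h => h.2.1.elim hu hv
  have hreach : G'.Reachable u v := by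
    have hxy : G'.Reachable x y := (hC ⟨x, hx⟩ ⟨y, hy⟩).lift Subtype.val
      fun a b h => Adj.reachable (G := G') ⟨h, Or.inl a.2, Or.inl a.2, Or.inl b.2⟩
    have hux' : G'.Adj u x := ⟨hux, Or.inr hx, Or.inr (Or.inl rfl), Or.inl hx⟩
    have hyv' : G'.Adj y v := ⟨hvy.symm, Or.inl hy, Or.inl hy, Or.inr (Or.inr rfl)⟩
    exact hux'.reachable.trans (hxy.trans hyv'.reachable)
  obtain ⟨p, hp⟩ := hreach.exists_walk_length_eq_dist
  have hlen := hp ▸ hreach.one_lt_dist_of_ne_of_not_adj huv.ne hnadj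
  have hsupp : ∀ c ∈ p.support, c ∈ C ∨ c = u ∨ c = v := by
    intro c hc
    obtain ⟨i, rfl, hi⟩ := Walk.mem_support_iff_exists_getVert.1 hc
    rcases hi.lt_or_eq with hi | rfl
    · exact (p.adj_getVert_succ hi).2.2.1
    · exact Or.inr (Or.inr p.getVert_length)
  have hcyc : (Walk.cons huv.symm (p.mapLe hle)).IsCycle := by
    rw [Walk.cons_isCycle_iff, Walk.isPath_mapLe, Walk.edges_mapLe_eq_edges]
    exact ⟨p.isPath_of_length_eq_dist hp, fun h => hnadj (p.edges_subset_edgeSet h).symm⟩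
  have hcl : (Walk.cons huv.symm (p.mapLe hle)).IsChordless := by
    rw [Walk.isChordless_iff_forall_mem_edges]
    simp only [Walk.support_cons, Walk.edges_cons, List.mem_cons, Walk.support_mapLe_eq_support,
      Walk.edges_mapLe_eq_edges]
    intro a b ha hb hab
    replace ha := ha.elim (· ▸ p.end_mem_support) id
    replace hb := hb.elim (· ▸ p.end_mem_support) id
    by_cases habC : a ∈ C ∨ b ∈ C
    · exact Or.inr ((p.isChordless_of_length_eq_dist hp).mem_edges ha hb
        ⟨hab, habC, hsupp a ha, hsupp b hb⟩)
    · rw [not_or] at habC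
      left
      rcases (hsupp a ha).resolve_left habC.1 with rfl | rfl <;>
        rcases (hsupp b hb).resolve_left habC.2 with rfl | rfl <;> simp_all [Sym2.eq_swap]
  have h3 := hG.length_le_three hcyc hcl
  rw [Walk.length_cons, Walk.length_mapLe] at h3
  have h₁ := p.adj_getVert_succ (i := 0) (by omega)
  have h₂ := p.adj_getVert_succ (i := 1) (by omega)
  rw [Walk.getVert_zero] at h₁
  rw [show 1 + 1 = p.length by omega, Walk.getVert_length] at h₂
  exact ⟨p.getVert 1, h₁.2.1.resolve_left hu, h₁.1, h₂.1.symm⟩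

theorem ConnectedComponent.preconnected_induce_image_supp {T : Set V}
    (c : (G.induce T).ConnectedComponent) : (G.induce (Subtype.val '' c.supp)).Preconnected := by
  rintro ⟨_, y, hy, rfl⟩ ⟨_, y', hy', rfl⟩
  exact (c.reachable_toSimpleGraph hy hy').lift
    (fun z => (⟨z.1.1, z.1, z.2, rfl⟩ : ↥(Subtype.val '' c.supp)))
    fun _ _ h => Adj.reachable (G := G.induce _) h

theorem MinimalSeparator.exists_adj_mem_supp {S : Set V} (hS : MinimalSeparator G S) {s : V}
    (hs : s ∈ S) (c : (G.induce Sᶜ).ConnectedComponent) : ∃ x ∈ c.supp, G.Adj s x := by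
  refine c.ind fun w => ?_
  have hpre : (G.induce (S \ {s})ᶜ).Preconnected :=
    not_not.1 (hS.2 _ (Set.sdiff_singleton_ssubset.2 hs))
  obtain ⟨p⟩ := hpre ⟨w, fun h => w.2 h.1⟩ ⟨s, fun h => h.2 rfl⟩
  -- the walk from `w` to `s` has to leave the component of `w` in `G - S`, and it can only do so
  -- by stepping onto `s`
  obtain ⟨d, -, ⟨hdS, hdw⟩, hd⟩ := p.exists_boundary_dart
    {y | ∃ h : y.1 ∉ S, (G.induce Sᶜ).Reachable ⟨y.1, h⟩ w} ⟨w.2, .refl _⟩ fun ⟨h, _⟩ => h hs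
  have hadj : G.Adj d.snd.1 d.fst.1 := d.adj.symm
  have hds : d.snd.1 = s := by
    by_contra hne
    have hdS' : d.snd.1 ∉ S := fun h => d.snd.2 ⟨h, hne⟩
    have hdd : (G.induce Sᶜ).Adj ⟨_, hdS'⟩ ⟨_, hdS⟩ := hadj
    exact hd ⟨hdS', hdd.reachable.trans hdw⟩
  exact ⟨⟨d.fst.1, hdS⟩, ConnectedComponent.sound hdw, congrArg (G.Adj · d.fst.1) hds ▸ hadj⟩

theorem IsChordal.exists_adj_adj_mem_supp (hG : IsChordal G) {S : Set V}
    (hS : MinimalSeparator G S) {u v : V} (hu : u ∈ S) (hv : v ∈ S) (huv : G.Adj u v)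
    (c : (G.induce Sᶜ).ConnectedComponent) : ∃ z ∈ c.supp, G.Adj u z ∧ G.Adj v z := by
  obtain ⟨x, hx, hux⟩ := hS.exists_adj_mem_supp hu c
  obtain ⟨y, hy, hvy⟩ := hS.exists_adj_mem_supp hv c
  have hnot : ∀ {s}, s ∈ S → s ∉ Subtype.val '' c.supp := fun hs ⟨z, _, hz⟩ => z.2 (hz ▸ hs)
  obtain ⟨_, ⟨z, hz, rfl⟩, huz, hvz⟩ := hG.exists_adj_adj_of_preconnected
    c.preconnected_induce_image_supp huv (hnot hu) (hnot hv) ⟨x, hx, rfl⟩ ⟨y, hy, rfl⟩ hux hvy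
  exact ⟨z, hz, huz, hvz⟩

theorem IsChordal.not_existsUnique_maximal_isClique [Finite V] (hG : IsChordal G) {S : Set V}
    (hS : MinimalSeparator G S) {u v : V} (hu : u ∈ S) (hv : v ∈ S) (huv : G.Adj u v) :
    ¬ ∃! C : Set V, Maximal G.IsClique C ∧ u ∈ C ∧ v ∈ C := by
  rintro ⟨C, ⟨hC, -⟩, hCuniq⟩
  have hmem : ∀ z, G.Adj u z → G.Adj v z → z ∈ C := by
    intro z huz hvz
    have htri : G.IsClique {u, v, z} :=
      isClique_insert.2 ⟨isClique_pair.2 fun _ => hvz, by simp [huv, huz]⟩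
    obtain ⟨D, hD, hDmax⟩ := Finite.exists_le_maximal htri
    exact hCuniq D ⟨hDmax, hD (by simp), hD (by simp)⟩ ▸ hD (by simp)
  obtain ⟨w₁, w₂, hw⟩ : ∃ w₁ w₂, ¬ (G.induce Sᶜ).Reachable w₁ w₂ := by
    simpa [IsSeparator, Preconnected] using hS.1
  obtain ⟨z₁, hz₁, huz₁, hvz₁⟩ := hG.exists_adj_adj_mem_supp hS hu hv huv
    ((G.induce Sᶜ).connectedComponentMk w₁)
  obtain ⟨z₂, hz₂, huz₂, hvz₂⟩ := hG.exists_adj_adj_mem_supp hS hu hv huv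
    ((G.induce Sᶜ).connectedComponentMk w₂)
  have hz : (G.induce Sᶜ).Reachable z₁ z₂ := by
    by_cases h : z₁ = z₂
    · exact h ▸ .refl _
    · exact Adj.reachable (G := G.induce Sᶜ)
        (hC.1 (hmem _ huz₁ hvz₁) (hmem _ huz₂ hvz₂) (Subtype.coe_ne_coe.2 h))
  exact hw ((ConnectedComponent.exact hz₁).symm.trans
    (hz.trans (ConnectedComponent.exact hz₂)))

theorem IsSeparator.preimage {G' : SimpleGraph W} {f : V → W} (hf : Function.Surjective f)
    (hadj : ∀ ⦃a b⦄, G.Adj a b → f a = f b ∨ G'.Adj (f a) (f b)) {S : Set W}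
    (hS : IsSeparator G' S) : IsSeparator G (f ⁻¹' S) := by
  intro hpre
  refine hS fun a b => ?_
  obtain ⟨a', ha'⟩ := hf a
  obtain ⟨b', hb'⟩ := hf b
  have := (hpre ⟨a', show f a' ∉ S from ha' ▸ a.2⟩ ⟨b', show f b' ∉ S from hb' ▸ b.2⟩).lift
    (fun x : ↥(f ⁻¹' S)ᶜ => (⟨f x, x.2⟩ : ↥Sᶜ)) fun x y h => (hadj h).elim
      (fun e => by simp only [e]; rfl) fun h' => Adj.reachable (G := G'.induce Sᶜ) h'
  convert this <;> simp [ha', hb']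

theorem KConnected.minimalSeparator [Fintype V] {k : ℕ} (hG : KConnected k G) {S : Set V}
    (hS : IsSeparator G S) (hk : S.ncard ≤ k) : MinimalSeparator G S :=
  ⟨hS, fun T hT hTS => (hG.2 T hTS).not_gt ((Set.ncard_lt_ncard hT S.toFinite).trans_le hk)⟩

section Contraction

variable [DecidableEq V] {u v : V}

def contractMap (huv : u ≠ v) (x : V) : {x : V // x ≠ v} :=
  if h : x = v then ⟨u, huv⟩ else ⟨x, h⟩

theorem contractMap_surjective (huv : u ≠ v) : Function.Surjective (contractMap huv) :=
  fun x => ⟨x.1, by simp [contractMap, x.2]⟩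

theorem contractMap_adj (huv : G.Adj u v) {a b : V} (hab : G.Adj a b) :
    contractMap huv.ne a = contractMap huv.ne b ∨
      (contract G u v).Adj (contractMap huv.ne a) (contractMap huv.ne b) := by
  refine or_iff_not_imp_left.2 fun hne => ⟨hne, ?_⟩
  by_cases ha : a = v <;> by_cases hb : b = v <;> simp_all [contractMap, adj_comm]

theorem preimage_contractMap_of_mem (huv : u ≠ v) {S : Set {x : V // x ≠ v}}
    (hu : ⟨u, huv⟩ ∈ S) : contractMap huv ⁻¹' S = insert v (Subtype.val '' S) := by
  ext x
  by_cases hx : x = v <;> simp [contractMap, hx, hu]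

theorem preimage_contractMap_of_notMem (huv : u ≠ v) {S : Set {x : V // x ≠ v}}
    (hu : ⟨u, huv⟩ ∉ S) : contractMap huv ⁻¹' S = Subtype.val '' S := by
  ext x
  by_cases hx : x = v <;> simp [contractMap, hx, hu]

end Contraction

end SimpleGraph

/-- In a `k`-connected chordal graph with at least `k+2` vertices,
an edge lying in a unique maximal clique is contractible. -/
theorem stmt_10 {V : Type*} [Fintype V] [DecidableEq V] (G : SimpleGraph V) (k : ℕ)
    (hcard : k + 2 ≤ Fintype.card V) (hconn : KConnected k G) (hch : IsChordal G)
    (u v : V) (he : G.Adj u v)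
    (huniq : ∃! C : Set V, Maximal G.IsClique C ∧ u ∈ C ∧ v ∈ C) :
    KConnected k (contract G u v) := by
  have huv : u ≠ v := he.ne
  refine ⟨?_, fun S hS => ?_⟩
  · rw [Fintype.card_subtype_compl, Fintype.card_subtype_eq]
    omega
  have hsep := hS.preimage (contractMap_surjective huv) fun _ _ => contractMap_adj he
  by_cases hu : ⟨u, huv⟩ ∈ S
  · rw [preimage_contractMap_of_mem huv hu] at hsep
    have hncard : (insert v (Subtype.val '' S)).ncard = S.ncard + 1 := by
      rw [Set.ncard_insert_of_notMem (by simp),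
        Set.ncard_image_of_injective _ Subtype.val_injective]
    by_contra! hlt
    exact hch.not_existsUnique_maximal_isClique (hconn.minimalSeparator hsep (by omega))
      (Set.mem_insert_of_mem _ ⟨_, hu, rfl⟩) (Set.mem_insert _ _) he huniq
  · rw [preimage_contractMap_of_notMem huv hu] at hsep
    simpa [Set.ncard_image_of_injective _ Subtype.val_injective] using hconn.2 _ hsep
end

section
/- Let G be a k-connected split graph with partition V(G) = I ∪ K into a stable set I and a clique K, and suppose |V(G)| ≥ k+2. Then every edge e = {u,v} with u ∈ K and v ∈ I is contractible. -/
open SimpleGraph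

/-!
Contracting `uv` merges `v` into `u`. A separator `S` of `G / uv` avoiding the merged vertex is
already a separator of `G`; one containing it becomes the separator `S ∪ {v}` of `G`. So it
suffices that in a `k`-connected split graph, a separator containing `v ∈ I` still has at least
`k` vertices besides `v`. Any separator `T` of a split graph cuts off a vertex `b ∈ I` all of
whose neighbours lie in `T`, since the rest of `G - T` hangs on the clique `K \ T`. As `I` is
stable, `b` is not adjacent to `v`, so `N(b) ⊆ T \ {v}` and `T \ {v}` itself separates `b` from
any other vertex, which exists because `|V| ≥ k + 2`.
-/

namespace SimpleGraph

variable {α β : Type*} {G : SimpleGraph α} {H : SimpleGraph β}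

theorem Preconnected.of_surjective_adj_or_eq (f : α → β) (hf : Function.Surjective f)
    (hadj : ∀ a b, G.Adj a b → H.Adj (f a) (f b) ∨ f a = f b) (hG : G.Preconnected) :
    H.Preconnected := by
  have reach : ∀ {a b}, G.Reachable a b → H.Reachable (f a) (f b) := by
    rintro a b ⟨w⟩
    induction w with
    | nil => rfl
    | cons h _ ih =>
      rcases hadj _ _ h with h' | h'
      · exact h'.reachable.trans ih
      · exact h' ▸ ih
  intro x y
  obtain ⟨a, rfl⟩ := hf x
  obtain ⟨b, rfl⟩ := hf y
  exact reach (hG a b)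

end SimpleGraph

section

variable {V W : Type*}

theorem IsSeparator.of_mapsTo_surjOn {G : SimpleGraph V} {H : SimpleGraph W} {S : Set W}
    {T : Set V} (f : V → W) (hadj : ∀ a b, G.Adj a b → H.Adj (f a) (f b) ∨ f a = f b)
    (hmaps : Set.MapsTo f Tᶜ Sᶜ) (hsurj : Set.SurjOn f Tᶜ Sᶜ) (hS : IsSeparator H S) :
    IsSeparator G T := fun hT =>
  hS <| hT.of_surjective_adj_or_eq (hmaps.restrict f Tᶜ Sᶜ)
    (hmaps.restrict_surjective_iff.mpr hsurj) fun a b h => (hadj a b h).imp id Subtype.ext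

theorem isSeparator_of_neighborSet_subset {G : SimpleGraph V} {S : Set V} {b c : V}
    (hb : b ∉ S) (hc : c ∉ S) (hbc : b ≠ c) (hN : G.neighborSet b ⊆ S) :
    IsSeparator G S := by
  intro hS
  obtain ⟨w⟩ := hS ⟨b, hb⟩ ⟨c, hc⟩
  cases w with
  | nil => exact hbc rfl
  | @cons _ x _ h _ => exact x.2 (hN h)

section Contraction

variable [DecidableEq V] {G : SimpleGraph V} {u v : V}

def contractVertex (huv : u ≠ v) (x : V) : {x : V // x ≠ v} :=
  if h : x = v then ⟨u, huv⟩ else ⟨x, h⟩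

theorem contractVertex_of_ne (huv : u ≠ v) {x : V} (hx : x ≠ v) :
    contractVertex huv x = ⟨x, hx⟩ :=
  dif_neg hx

theorem contractVertex_adj_or_eq (huv : u ≠ v) {x y : V} (h : G.Adj x y) :
    (contract G u v).Adj (contractVertex huv x) (contractVertex huv y) ∨
      contractVertex huv x = contractVertex huv y := by
  simp only [contractVertex, contract, ne_eq, Subtype.ext_iff]
  split_ifs with hx hy hy
  · exact absurd (hx.trans hy.symm) h.ne
  · subst hx; tauto
  · subst hy; tauto
  · tauto

theorem surjOn_contractVertex (huv : u ≠ v) (S : Set {x : V // x ≠ v}) :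
    Set.SurjOn (contractVertex huv) (insert v (Subtype.val '' S))ᶜ Sᶜ := by
  intro y hy
  refine ⟨y.1, ?_, contractVertex_of_ne huv y.2⟩
  simpa [y.2] using hy

theorem isSeparator_image_of_contract (huv : u ≠ v) {S : Set {x : V // x ≠ v}}
    (hu : ⟨u, huv⟩ ∉ S) (hS : IsSeparator (contract G u v) S) :
    IsSeparator G (Subtype.val '' S) := by
  refine IsSeparator.of_mapsTo_surjOn (contractVertex huv)
    (fun _ _ => contractVertex_adj_or_eq huv) ?_
    ((surjOn_contractVertex huv S).mono (Set.compl_subset_compl.mpr (Set.subset_insert _ _))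
      subset_rfl) hS
  intro x hx
  by_cases hxv : x = v
  · simpa [contractVertex, hxv] using hu
  · rw [contractVertex_of_ne huv hxv]
    exact fun hxS => hx ⟨_, hxS, rfl⟩

theorem isSeparator_insert_image_of_contract (huv : u ≠ v) {S : Set {x : V // x ≠ v}}
    (hS : IsSeparator (contract G u v) S) :
    IsSeparator G (insert v (Subtype.val '' S)) := by
  refine IsSeparator.of_mapsTo_surjOn (contractVertex huv)
    (fun _ _ => contractVertex_adj_or_eq huv) ?_ (surjOn_contractVertex huv S) hS
  intro x hx
  have hxv : x ≠ v := fun h => hx (Or.inl h)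
  rw [contractVertex_of_ne huv hxv]
  exact fun hxS => hx (Or.inr ⟨_, hxS, rfl⟩)

end Contraction

namespace IsSplitPartition

variable {G : SimpleGraph V} {I K : Set V}

theorem exists_neighborSet_subset_of_isSeparator (hsplit : IsSplitPartition G I K) {T : Set V}
    (hT : IsSeparator G T) : ∃ b ∈ I, b ∉ T ∧ G.neighborSet b ⊆ T := by
  obtain ⟨hIK, -, hI, hK⟩ := hsplit
  have hmem : ∀ x, x ∈ I ∨ x ∈ K := fun x => (Set.ext_iff.mp hIK x).mpr trivial
  by_contra! hleave
  have toK : ∀ a : ↥Tᶜ, ∃ a' : ↥Tᶜ, a'.1 ∈ K ∧ (G.induce Tᶜ).Reachable a a' := by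
    intro a
    rcases hmem a with haI | haK
    · obtain ⟨c, hac, hcT⟩ := Set.not_subset.mp (hleave a haI a.2)
      have hcK : c ∈ K := (hmem c).resolve_left (hI a haI c · hac)
      exact ⟨⟨c, hcT⟩, hcK, Adj.reachable (G := G.induce Tᶜ) hac⟩
    · exact ⟨a, haK, .rfl⟩
  refine hT fun a b => ?_
  obtain ⟨a', haK, ha⟩ := toK a
  obtain ⟨b', hbK, hb⟩ := toK b
  refine ha.trans (Reachable.trans ?_ hb.symm)
  by_cases hab : a' = b'
  · rw [hab]
  · exact Adj.reachable (G := G.induce Tᶜ) (hK haK hbK (Subtype.coe_ne_coe.mpr hab))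

theorem le_ncard_of_isSeparator_insert [Fintype V] {k : ℕ} (hsplit : IsSplitPartition G I K)
    (hcard : k + 2 ≤ Fintype.card V) (hconn : KConnected k G) {v : V} (hv : v ∈ I) {S : Set V}
    (hT : IsSeparator G (insert v S)) : k ≤ S.ncard := by
  by_contra! hlt
  obtain ⟨b, hbI, hbT, hN⟩ := hsplit.exists_neighborSet_subset_of_isSeparator hT
  have hNS : G.neighborSet b ⊆ S := fun c hc =>
    (hN hc).resolve_left fun hcv => hsplit.2.2.1 b hbI v hv (hcv ▸ hc)
  obtain ⟨c, -, hc⟩ := Set.exists_mem_notMem_of_ncard_lt_ncard (s := insert b S) (t := .univ)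
    (by rw [Set.ncard_univ, Nat.card_eq_fintype_card]; linarith [Set.ncard_insert_le b S])
  have hbS : b ∉ S := fun h => hbT (Or.inr h)
  have hbc : b ≠ c := fun h => hc (Or.inl h.symm)
  exact hlt.not_ge (hconn.2 S (isSeparator_of_neighborSet_subset hbS (fun h => hc (Or.inr h))
    hbc hNS))

end IsSplitPartition

end

theorem stmt_11_general {V : Type*} [Fintype V] [DecidableEq V] (G : SimpleGraph V) (k : ℕ)
    (I K : Set V) (hsplit : IsSplitPartition G I K)
    (hcard : k + 2 ≤ Fintype.card V) (hconn : KConnected k G)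
    (u v : V) (hv : v ∈ I) (he : G.Adj u v) :
    KConnected k (contract G u v) := by
  have huv : u ≠ v := he.ne
  refine ⟨?_, fun S hS => ?_⟩
  · have : Fintype.card {x : V // x ≠ v} = Fintype.card V - 1 := by
      simp [Fintype.card_subtype_compl]
    omega
  rw [← Set.ncard_image_of_injective S Subtype.val_injective]
  by_cases hu : ⟨u, huv⟩ ∈ S
  · exact hsplit.le_ncard_of_isSeparator_insert hcard hconn hv
      (isSeparator_insert_image_of_contract huv hS)
  · exact hconn.2 _ (isSeparator_image_of_contract huv hu hS)

/-- In a `k`-connected split graph with at least `k+2` vertices,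
every edge between the clique side and the stable side is contractible. -/
theorem stmt_11 {V : Type*} [Fintype V] [DecidableEq V] (G : SimpleGraph V) (k : ℕ)
    (I K : Set V) (hsplit : IsSplitPartition G I K)
    (hcard : k + 2 ≤ Fintype.card V) (hconn : KConnected k G)
    (u v : V) (hu : u ∈ K) (hv : v ∈ I) (he : G.Adj u v) :
    KConnected k (contract G u v) :=
  stmt_11_general G k I K hsplit hcard hconn u v hv he
end

section
/- Let G be a regular k-connected split graph with at least k+2 vertices. Then G is contraction critical: no edge of G is contractible. -/
open SimpleGraph

/-!
In a split graph with stable set `I` and clique `K`, a vertex of `I` has degree at most `|K|`,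
while a vertex `c ∈ K` has degree at least `|K| - 1 + |N(c) ∩ I|`. If the graph is regular and has
an edge, some vertex of `I` has a neighbour `c ∈ K`, which pins the common degree at `|K|`; then
every vertex of `I` sees all of `K`, and counting at `c` again gives `|I| ≤ 1`. So `G = Kₙ`, whose
connectivity `n - 1` drops to `n - 2` when an edge is contracted.
-/

section

variable {V : Type*}

lemma not_isSeparator_top (S : Set V) : ¬ IsSeparator (⊤ : SimpleGraph V) S := by
  simp [IsSeparator]

lemma vConn_top [Fintype V] [Nonempty V] : vConn (⊤ : SimpleGraph V) = Fintype.card V - 1 := by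
  have hcompl (S : Set V) : S.ncard + Sᶜ.ncard = Fintype.card V := by
    rw [Set.ncard_add_ncard_compl, Nat.card_eq_fintype_card]
  obtain ⟨x⟩ := ‹Nonempty V›
  apply le_antisymm
  · refine Nat.sInf_le ⟨{x}ᶜ, ?_, Or.inr ?_⟩
    · have := hcompl {x}ᶜ
      rw [compl_compl, Set.ncard_singleton] at this
      omega
    · rw [compl_compl, Set.ncard_singleton]
  · refine le_csInf ⟨_, {x}ᶜ, rfl, Or.inr (by simp)⟩ ?_
    rintro _ ⟨S, rfl, hS | hS⟩
    · exact absurd hS (not_isSeparator_top S)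
    · have := hcompl S
      omega

lemma contract_top (u v : V) : contract (⊤ : SimpleGraph V) u v = ⊤ := by
  ext a b
  exact ⟨And.left, fun h => ⟨h, Or.inl (Subtype.coe_ne_coe.mpr h)⟩⟩

lemma SimpleGraph.degree_eq_ncard_neighborSet (G : SimpleGraph V) (v : V)
    [Fintype (G.neighborSet v)] : G.degree v = (G.neighborSet v).ncard := by
  rw [← card_neighborSet_eq_degree, Set.ncard_eq_toFinset_card', Set.toFinset_card]

namespace IsSplitPartition

variable {G : SimpleGraph V} {I K : Set V} {a c : V}

lemma mem_or_mem (h : IsSplitPartition G I K) (x : V) : x ∈ I ∨ x ∈ K :=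
  (h.1.symm ▸ Set.mem_univ x : x ∈ I ∪ K)

lemma eq_top_of_forall_adj (h : IsSplitPartition G I K) (hIK : ∀ a ∈ I, ∀ c ∈ K, G.Adj a c)
    (hI : I.Subsingleton) : G = ⊤ := by
  ext x y
  refine ⟨Adj.ne, fun hxy => ?_⟩
  rcases h.mem_or_mem x with hx | hx <;> rcases h.mem_or_mem y with hy | hy
  · exact absurd (hI hx hy) hxy
  · exact hIK x hx y hy
  · exact (hIK y hy x hx).symm
  · exact h.2.2.2 hx hy hxy

lemma neighborSet_subset (h : IsSplitPartition G I K) (ha : a ∈ I) : G.neighborSet a ⊆ K :=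
  fun b hab => (h.mem_or_mem b).resolve_left fun hb => h.2.2.1 a ha b hb hab

variable [Fintype V] [DecidableRel G.Adj]

lemma degree_le_ncard (h : IsSplitPartition G I K) (ha : a ∈ I) : G.degree a ≤ K.ncard := by
  rw [degree_eq_ncard_neighborSet]
  exact Set.ncard_le_ncard (h.neighborSet_subset ha)

lemma adj_of_degree_eq_ncard (h : IsSplitPartition G I K) (ha : a ∈ I)
    (hdeg : G.degree a = K.ncard) (hc : c ∈ K) : G.Adj a c := by
  rw [degree_eq_ncard_neighborSet] at hdeg
  rw [← mem_neighborSet, Set.eq_of_subset_of_ncard_le (h.neighborSet_subset ha) hdeg.ge]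
  exact hc

lemma ncard_add_ncard_le_degree_add_one (h : IsSplitPartition G I K) (hc : c ∈ K) :
    K.ncard + (G.neighborSet c ∩ I).ncard ≤ G.degree c + 1 := by
  have hsub : K \ {c} ∪ (G.neighborSet c ∩ I) ⊆ G.neighborSet c := by
    rintro x (⟨hx, hxc⟩ | ⟨hx, -⟩)
    · exact h.2.2.2 hc hx (Ne.symm hxc)
    · exact hx
  have hdisj : Disjoint (K \ {c}) (G.neighborSet c ∩ I) :=
    (h.2.1.symm.mono Set.sdiff_subset Set.inter_subset_right)
  have := Set.ncard_le_ncard hsub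
  rw [Set.ncard_union_eq hdisj, Set.ncard_sdiff_singleton_of_mem hc, ← degree_eq_ncard_neighborSet]
    at this
  have : 0 < K.ncard := (Set.ncard_pos).mpr ⟨c, hc⟩
  omega

theorem eq_top_of_isRegularOfDegree (h : IsSplitPartition G I K) {d : ℕ}
    (hd : G.IsRegularOfDegree d) (hG : G ≠ ⊥) : G = ⊤ := by
  rcases I.eq_empty_or_nonempty with rfl | ⟨a, ha⟩
  · exact h.eq_top_of_forall_adj (by simp) Set.subsingleton_empty
  obtain ⟨u, w, hu⟩ := ne_bot_iff_exists_adj.mp hG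
  have hd_pos : 0 < G.degree a := by
    rw [hd a, ← hd u]
    exact (G.degree_pos_iff_exists_adj u).mpr ⟨w, hu⟩
  obtain ⟨c, hac⟩ := (G.degree_pos_iff_exists_adj a).mp hd_pos
  have hc : c ∈ K := h.neighborSet_subset ha hac
  have hca : (G.neighborSet c ∩ I).Nonempty := ⟨a, hac.symm, ha⟩
  have hdK : d = K.ncard := by
    have := h.ncard_add_ncard_le_degree_add_one hc
    have := h.degree_le_ncard ha
    rw [hd] at *
    have := (Set.ncard_pos).mpr hca
    omega
  have hIK : ∀ a ∈ I, ∀ c ∈ K, G.Adj a c := fun a ha c hc =>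
    h.adj_of_degree_eq_ncard ha (hd a ▸ hdK) hc
  refine h.eq_top_of_forall_adj hIK ((Set.ncard_le_one).mp ?_)
  have hI : G.neighborSet c ∩ I = I :=
    Set.inter_eq_right.mpr fun b hb => (hIK b hb c hc).symm
  have := h.ncard_add_ncard_le_degree_add_one hc
  rw [hI, hd] at this
  omega

end IsSplitPartition

end

theorem stmt_13_general {V : Type*} [Fintype V] [DecidableEq V] (G : SimpleGraph V) [DecidableRel G.Adj]
    (I K : Set V) (hsplit : IsSplitPartition G I K)
    (hreg : ∃ d : ℕ, G.IsRegularOfDegree d) :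
    ∀ u v : V, G.Adj u v → vConn (contract G u v) < vConn G := by
  intro u v huv
  obtain ⟨d, hd⟩ := hreg
  obtain rfl : G = ⊤ := hsplit.eq_top_of_isRegularOfDegree hd (ne_bot_iff_exists_adj.mpr ⟨u, v, huv⟩)
  have : Nonempty {x : V // x ≠ v} := ⟨⟨u, huv.ne⟩⟩
  have : Nonempty V := ⟨u⟩
  simp only [contract_top, vConn_top, Fintype.card_subtype_compl, Fintype.card_subtype_eq]
  have := Fintype.one_lt_card_iff.mpr ⟨u, v, huv.ne⟩
  omega

/-- A regular `k`-connected split graph with at least `k+2`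
vertices is contraction critical. -/
theorem stmt_13 {V : Type*} [Fintype V] [DecidableEq V] (G : SimpleGraph V) [DecidableRel G.Adj] (k : ℕ)
    (I K : Set V) (hsplit : IsSplitPartition G I K)
    (hreg : ∃ d : ℕ, G.IsRegularOfDegree d)
    (hcard : k + 2 ≤ Fintype.card V) (hconn : KConnected k G) :
    ∀ u v : V, G.Adj u v → vConn (contract G u v) < vConn G :=
  stmt_13_general G I K hsplit hreg
end
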